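/- arXiv:2210.01885 — 2 statements merged into one kernel-verified Lean document; each statement's English description precedes it below -/
import Mathlib

section
/- Let (V, b_V) and (W, b_W) be finite-dimensional complex vector spaces equipped with Hermitian forms, and let f : V → W be a linear map. Then f admits an adjoint if and only if f(Ker b_V) ⊆ Ker b_W. -/
/-!
Hermitian forms are reflexive, and an adjoint of `f` is exactly a lift of the map
`x ↦ b_W(x, f ·)` along the Riesz map `v ↦ b_V(v, ·)` into the conjugate-linear dual. For a
reflexive form on a finite-dimensional space, the range of the Riesz map is the annihilator of
`Ker b_V`: it lies in it by reflexivity, and both have dimension `dim V - dim Ker b_V`, which is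
computed after conjugating functionals into the ordinary dual. The functionals `b_W(x, f ·)`
vanish on `Ker b_V` precisely when `f (Ker b_V) ⊆ Ker b_W`.
-/

open Module LinearMap

theorem LinearEquiv.finrank_eq_of_semilinear {R M N : Type*} [Semiring R]
    [AddCommMonoid M] [Module R M] [AddCommMonoid N] [Module R N] {σ σ' : R →+* R}
    [RingHomInvPair σ σ'] [RingHomInvPair σ' σ] (e : M ≃ₛₗ[σ] N) :
    finrank R M = finrank R N := by
  have h := congrArg Cardinal.toNat <| lift_rank_eq_of_equiv_equiv σ e.toAddEquiv
    (Function.bijective_iff_has_inverse.2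
      ⟨σ', fun _ ↦ RingHomInvPair.comp_apply_eq, fun _ ↦ RingHomInvPair.comp_apply_eq₂⟩)
    e.map_smulₛₗ
  rwa [Cardinal.toNat_lift, Cardinal.toNat_lift] at h

theorem LinearMap.exists_comp_eq_of_range_le {R M N P : Type*} [Semiring R] [AddCommMonoid M]
    [Module R M] [AddCommMonoid N] [Module R N] [AddCommMonoid P] [Module R P]
    [Projective R P] (f : M →ₗ[R] N) (g : P →ₗ[R] N) (h : range g ≤ range f) :
    ∃ l : P →ₗ[R] M, f ∘ₗ l = g := by
  obtain ⟨l, hl⟩ := projective_lifting_property f.rangeRestrict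
    (g.codRestrict _ fun x ↦ h ⟨x, rfl⟩) f.surjective_rangeRestrict
  exact ⟨l, ext fun x ↦ congr(($hl x : N))⟩

section SemilinearDual

variable {K : Type*} [CommSemiring K] (σ : K →+* K) [RingHomInvPair σ σ]

def semilinearDualEquiv (V : Type*) [AddCommMonoid V] [Module K V] :
    (V →ₛₗ[σ] K) ≃ₛₗ[σ] Dual K V where
  toFun φ := σ.toSemilinearMap ∘ₛₗ φ
  invFun ψ := σ.toSemilinearMap ∘ₛₗ ψ
  left_inv φ := by ext; simp
  right_inv ψ := by ext; simp
  map_add' _ _ := by ext; simp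
  map_smul' _ _ := by ext; simp

@[simp]
theorem semilinearDualEquiv_apply {V : Type*} [AddCommMonoid V] [Module K V]
    (φ : V →ₛₗ[σ] K) (y : V) : semilinearDualEquiv σ V φ y = σ (φ y) :=
  rfl

end SemilinearDual

namespace LinearMap

theorem IsAdjointPair.map_ker_le_ker {R V W M : Type*} [CommSemiring R] [AddCommMonoid V]
    [Module R V] [AddCommMonoid W] [Module R W] [AddCommMonoid M] [Module R M] {σ : R →+* R}
    {B : V →ₗ[R] V →ₛₗ[σ] M} {B' : W →ₗ[R] W →ₛₗ[σ] M} {f : V →ₗ[R] W} {g : W →ₗ[R] V}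
    (hB : B.IsRefl) (hB' : B'.IsRefl) (h : IsAdjointPair B' B g f) :
    (ker B).map f ≤ ker B' := by
  rintro _ ⟨y, hy, rfl⟩
  refine mem_ker.2 (ext fun x ↦ hB' x (f y) ?_)
  rw [← h, hB y (g x) (by simp [mem_ker.1 hy])]

variable {K V W : Type*} [Field K] {σ : K →+* K} [RingHomInvPair σ σ]
  [AddCommGroup V] [Module K V] [FiniteDimensional K V] [AddCommGroup W] [Module K W]
  {B : V →ₗ[K] V →ₛₗ[σ] K}

theorem IsRefl.map_range_eq_dualAnnihilator_ker (hB : B.IsRefl) :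
    (range B).map (semilinearDualEquiv σ V : _ →ₛₗ[σ] _) = (ker B).dualAnnihilator := by
  apply Submodule.eq_of_le_of_finrank_eq
  · rintro _ ⟨_, ⟨v, rfl⟩, rfl⟩
    refine (Submodule.mem_dualAnnihilator _).2 fun y hy ↦ ?_
    simp [hB y v (by simp [mem_ker.1 hy])]
  · rw [← ((semilinearDualEquiv σ V).submoduleMap _).finrank_eq_of_semilinear]
    have := finrank_range_add_finrank_ker B
    have := Subspace.finrank_add_finrank_dualAnnihilator_eq (ker B)
    omega

theorem IsRefl.mem_range_of_ker_le (hB : B.IsRefl) {φ : V →ₛₗ[σ] K} (hφ : ker B ≤ ker φ) :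
    φ ∈ range B := by
  have hφ' : semilinearDualEquiv σ V φ ∈ (ker B).dualAnnihilator :=
    (Submodule.mem_dualAnnihilator _).2 fun y hy ↦ by simp [mem_ker.1 (hφ hy)]
  rw [← hB.map_range_eq_dualAnnihilator_ker, Submodule.mem_map_equiv] at hφ'
  simpa using hφ'

theorem exists_isAdjointPair_of_map_ker_le {B' : W →ₗ[K] W →ₛₗ[σ] K} {f : V →ₗ[K] W}
    (hB : B.IsRefl) (hB' : B'.IsRefl) (h : (ker B).map f ≤ ker B') :
    ∃ g : W →ₗ[K] V, IsAdjointPair B' B g f := by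
  simp only [isAdjointPair_iff_comp_eq_compl₂]
  refine exists_comp_eq_of_range_le _ _ ?_
  rintro _ ⟨x, rfl⟩
  refine hB.mem_range_of_ker_le fun y hy ↦ hB' (f y) x ?_
  simp [mem_ker.1 (h ⟨y, hy, rfl⟩)]

end LinearMap

theorem adjoint_exists_iff_maps_kernel_general
    {V W : Type*} [AddCommGroup V] [Module ℂ V] [FiniteDimensional ℂ V]
    [AddCommGroup W] [Module ℂ W]
    (bV : V →ₗ[ℂ] V →ₛₗ[starRingEnd ℂ] ℂ)
    (hbV : ∀ x y : V, bV x y = starRingEnd ℂ (bV y x))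
    (bW : W →ₗ[ℂ] W →ₛₗ[starRingEnd ℂ] ℂ)
    (hbW : ∀ x y : W, bW x y = starRingEnd ℂ (bW y x))
    (f : V →ₗ[ℂ] W) :
    (∃ g : W →ₗ[ℂ] V, ∀ (x : W) (y : V), bV (g x) y = bW x (f y)) ↔
      Submodule.map f (LinearMap.ker bV) ≤ LinearMap.ker bW := by
  have hV : bV.IsRefl := IsRefl.flip_isRefl_iff.1 (IsSymm.isRefl ⟨fun x y ↦ (hbV x y).symm⟩)
  have hW : bW.IsRefl := IsRefl.flip_isRefl_iff.1 (IsSymm.isRefl ⟨fun x y ↦ (hbW x y).symm⟩)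
  exact ⟨fun ⟨_, hg⟩ ↦ IsAdjointPair.map_ker_le_ker hV hW hg,
    exists_isAdjointPair_of_map_ker_le hV hW⟩

/-- A linear map `f : V → W` between finite-dimensional complex vector
spaces equipped with Hermitian forms admits an adjoint if and only if
`f (Ker b_V) ⊆ Ker b_W`. -/
theorem adjoint_exists_iff_maps_kernel
    {V W : Type*} [AddCommGroup V] [Module ℂ V] [FiniteDimensional ℂ V]
    [AddCommGroup W] [Module ℂ W] [FiniteDimensional ℂ W]
    (bV : V →ₗ[ℂ] V →ₛₗ[starRingEnd ℂ] ℂ)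
    (hbV : ∀ x y : V, bV x y = starRingEnd ℂ (bV y x))
    (bW : W →ₗ[ℂ] W →ₛₗ[starRingEnd ℂ] ℂ)
    (hbW : ∀ x y : W, bW x y = starRingEnd ℂ (bW y x))
    (f : V →ₗ[ℂ] W) :
    (∃ g : W →ₗ[ℂ] V, ∀ (x : W) (y : V), bV (g x) y = bW x (f y)) ↔
      Submodule.map f (LinearMap.ker bV) ≤ LinearMap.ker bW :=
  adjoint_exists_iff_maps_kernel_general bV hbV bW hbW f
end

section
/- Let b₁ and b₂ be Hermitian forms on a finite-dimensional complex vector space V such that h := b₁ + b₂ is positive-definite. For j = 1, 2 let T_j : V → V be the unique linear map satisfying h(T_j x, y) = b_j(x, y) for all x, y ∈ V, and define the quotient form q(x, y) = b₁(T₂ x, T₂ y) + b₂(T₁ x, T₁ y). Then q is a Hermitian form on V, and Ker b₁ ⊆ Ker q and Ker b₂ ⊆ Ker q. -/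
/-- Let `b₁, b₂` be Hermitian forms on `V` with `h := b₁ + b₂`
positive-definite, and let `T₁, T₂` be the unique linear maps with
`h (Tⱼ x) y = bⱼ x y`. Then the quotient form
`q x y = b₁ (T₂ x) (T₂ y) + b₂ (T₁ x) (T₁ y)` is a Hermitian form on `V`, and
`Ker b₁ ⊆ Ker q` and `Ker b₂ ⊆ Ker q`. -/
theorem quotient_form_hermitian_and_kernels
    {V : Type*} [AddCommGroup V] [Module ℂ V] [FiniteDimensional ℂ V]
    (b₁ b₂ q : V →ₗ[ℂ] V →ₛₗ[starRingEnd ℂ] ℂ)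
    (hb₁ : ∀ x y : V, b₁ x y = starRingEnd ℂ (b₁ y x))
    (hb₂ : ∀ x y : V, b₂ x y = starRingEnd ℂ (b₂ y x))
    (hpos : ∀ x : V, x ≠ 0 → 0 < (b₁ x x + b₂ x x).re)
    (T₁ T₂ : V →ₗ[ℂ] V)
    (hT₁ : ∀ x y : V, b₁ (T₁ x) y + b₂ (T₁ x) y = b₁ x y)
    (hT₂ : ∀ x y : V, b₁ (T₂ x) y + b₂ (T₂ x) y = b₂ x y)
    (hq : ∀ x y : V, q x y = b₁ (T₂ x) (T₂ y) + b₂ (T₁ x) (T₁ y)) :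
    (∀ x y : V, q x y = starRingEnd ℂ (q y x)) ∧
    LinearMap.ker b₁ ≤ LinearMap.ker q ∧
    LinearMap.ker b₂ ≤ LinearMap.ker q := by
  have hnd : ∀ v : V, (∀ y : V, b₁ v y + b₂ v y = 0) → v = 0 := by
    intro v hv
    by_contra h0
    have := hpos v h0
    rw [hv v] at this
    simp at this
  refine ⟨?_, ?_, ?_⟩
  · intro x y
    rw [hq x y, hq y x, map_add, ← hb₁, ← hb₂]
  · intro x hx
    have hx0 : b₁ x = 0 := hx
    have hx' : ∀ y : V, b₁ x y = 0 := by intro y; rw [hx0]; rfl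
    have hT1x : T₁ x = 0 := hnd _ (fun y => by rw [hT₁ x y, hx' y])
    have hT2x : T₂ x = x := by
      have h0 : T₂ x - x = 0 := by
        apply hnd
        intro y
        simp only [map_sub, LinearMap.sub_apply]
        linear_combination hT₂ x y - hx' y
      exact sub_eq_zero.mp h0
    have : q x = 0 := by
      ext y
      rw [hq x y, hT1x, hT2x, hx' (T₂ y)]
      simp
    exact this
  · intro x hx
    have hx0 : b₂ x = 0 := hx
    have hx' : ∀ y : V, b₂ x y = 0 := by intro y; rw [hx0]; rfl
    have hT2x : T₂ x = 0 := hnd _ (fun y => by rw [hT₂ x y, hx' y])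
    have hT1x : T₁ x = x := by
      have h0 : T₁ x - x = 0 := by
        apply hnd
        intro y
        simp only [map_sub, LinearMap.sub_apply]
        linear_combination hT₁ x y - hx' y
      exact sub_eq_zero.mp h0
    have : q x = 0 := by
      ext y
      rw [hq x y, hT2x, hT1x, hx' (T₁ y)]
      simp
    exact this
end
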